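/- Let G be a 1-cop-win graph of finite corner rank α > 2. Then for every vertex c of G there exists a vertex r with cr(r) ≥ α−2 such that some c' ∈ F_{α−2}(c) is not adjacent to r (i.e. an (α−2)-proj-safe vertex exists no matter where the cop stands). -/

import Mathlib

open Classical

/-- A finite reflexive graph: adjacency is symmetric and every vertex is
adjacent to itself (closed neighborhood `N[v] = {u | Adj v u}`). -/
structure RefGraph (V : Type*) where
  Adj : V → V → Prop
  symm : ∀ u v, Adj u v → Adj v u
  refl : ∀ v, Adj v v

namespace RefGraph

variable {V : Type*}

/-- `w` strictly corners `v` within the induced subgraph on `S`,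
i.e. `N_S[v] ⊊ N_S[w]`. -/
def StrictCornersIn (G : RefGraph V) (S : Set V) (w v : V) : Prop :=
  w ∈ S ∧ v ∈ S ∧ (∀ u ∈ S, G.Adj v u → G.Adj w u) ∧ ∃ u ∈ S, G.Adj w u ∧ ¬ G.Adj v u

/-- `v` is a strict corner of the induced subgraph on `S`. -/
def IsStrictCorner (G : RefGraph V) (S : Set V) (v : V) : Prop :=
  ∃ w, G.StrictCornersIn S w v

/-- `S` induces a clique. -/
def IsCliqueSet (G : RefGraph V) (S : Set V) : Prop :=
  ∀ u ∈ S, ∀ v ∈ S, G.Adj u v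

/-- `lvl k` is the vertex set of the graph `G_{k+1}` of the corner ranking
procedure: start with all vertices and repeatedly delete all strict corners. -/
def lvl (G : RefGraph V) : ℕ → Set V
  | 0 => Set.univ
  | k + 1 => {v ∈ G.lvl k | ¬ G.IsStrictCorner (G.lvl k) v}

/-- The corner rank of a vertex: the stage (1-indexed) at which it is a strict
corner, or at which the remaining graph is a clique; `∞` if neither ever occurs. -/
noncomputable def cr (G : RefGraph V) (v : V) : ℕ∞ :=
  sInf {n : ℕ∞ | ∃ m : ℕ, n = (m : ℕ∞) + 1 ∧ v ∈ G.lvl m ∧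
    (G.IsStrictCorner (G.lvl m) v ∨ G.IsCliqueSet (G.lvl m))}

/-- The vertex set of `Gₖ`: the vertices of corner rank at least `k`. -/
def GkSet (G : RefGraph V) (k : ℕ) : Set V := {v | (k : ℕ∞) ≤ G.cr v}

/-- The corner rank of the graph: the largest corner rank of a vertex. -/
noncomputable def crGraph (G : RefGraph V) [Fintype V] : ℕ∞ :=
  Finset.univ.sup fun v => G.cr v

/-- The projection map `fₖ` on a single vertex `u` of `Gₖ`. -/
noncomputable def fk (G : RefGraph V) (k : ℕ) (u : V) : Set V :=
  if (k : ℕ∞) < G.cr u then {u}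
  else {w | w ∈ G.GkSet (k + 1) ∧ G.StrictCornersIn (G.GkSet k) w u}

/-- The projection map `Fₖ`: `F₁` is the identity and `Fₖ₊₁ = fₖ ∘ Fₖ`. -/
noncomputable def Fk (G : RefGraph V) : ℕ → V → Set V
  | 0, v => {v}
  | 1, v => {v}
  | k + 2, v => ⋃ u ∈ G.Fk (k + 1) v, G.fk (k + 1) u

/-- `r` is `k`-cornered by `c`: for `k = 0`, `c = r`; for `k ≥ 1`, some
`r' ∈ Fₖ(r)` is cornered by `c` in the subgraph induced by `V(Gₖ) ∪ {c}`. -/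
def kCornered (G : RefGraph V) : ℕ → V → V → Prop
  | 0, c, r => c = r
  | k + 1, c, r => ∃ r' ∈ G.Fk (k + 1) r,
      ∀ u, (u ∈ G.GkSet (k + 1) ∨ u = c) → G.Adj r' u → G.Adj c u

/-- With the cop at `c`, the vertex `r` is `k`-proj-safe: `cr r ≥ k` and some
`c' ∈ Fₖ(c)` is not adjacent to `r`. -/
def ProjSafe (G : RefGraph V) (k : ℕ) (c r : V) : Prop :=
  (k : ℕ∞) ≤ G.cr r ∧ ∃ c' ∈ G.Fk k c, ¬ G.Adj c' r

/-- The cop at `c` can win within `k` cop moves against the robber at `r`,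
robber to move. -/
def WinWithin (G : RefGraph V) : ℕ → V → V → Prop
  | 0, c, r => c = r
  | k + 1, c, r => c = r ∨ ∀ r₁, G.Adj r r₁ → ∃ c₁, G.Adj c c₁ ∧ G.WinWithin k c₁ r₁

/-- The cop at `c` can guarantee catching the robber at `r` within `n` cop
moves, cop to move. -/
def CanCatch (G : RefGraph V) : ℕ → V → V → Prop
  | 0, c, r => c = r
  | n + 1, c, r => c = r ∨ ∃ c', G.Adj c c' ∧
      (c' = r ∨ ∀ r', G.Adj r r' → G.CanCatch n c' r')

/-- The cop has a winning strategy: some initial placement from which she can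
guarantee capture in some bounded number of moves, whatever the robber does. -/
def CopWin (G : RefGraph V) : Prop :=
  ∃ (n : ℕ) (c₀ : V), ∀ r₀ : V, G.CanCatch n c₀ r₀

/-- The capture time: the least `n` such that the cop has an initial placement
guaranteeing capture within `n` cop moves. -/
noncomputable def capt (G : RefGraph V) : ℕ :=
  sInf {n : ℕ | ∃ c₀ : V, ∀ r₀ : V, G.CanCatch n c₀ r₀}

/-- A graph of finite corner rank `α` is `1`-cop-win if some vertex of corner
rank `α` is adjacent to every vertex of `G_{α-1}`. -/
def OneCopWin (G : RefGraph V) (α : ℕ) : Prop :=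
  ∃ x, G.cr x = (α : ℕ∞) ∧ ∀ u, ((α - 1 : ℕ) : ℕ∞) ≤ G.cr u → G.Adj x u

/-- `r`-cop-win for `r ∈ {0,1}`. -/
def RCopWin (G : RefGraph V) (r α : ℕ) : Prop :=
  (r = 1 ∧ G.OneCopWin α) ∨ (r = 0 ∧ ¬ G.OneCopWin α)

/-- The largest finite corner rank occurring in `G` (0 if none occurs). -/
noncomputable def gammaMax (G : RefGraph V) : ℕ :=
  sSup {n : ℕ | ∃ v, G.cr v = (n : ℕ∞)}

/-- `F_∞`: equal to `F_{γ+1}` where `γ` is the largest finite corner rank, and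
the identity (`F₁`) when no vertex has finite corner rank. -/
noncomputable def Finf (G : RefGraph V) : V → Set V :=
  G.Fk (G.gammaMax + 1)

/-- `e` lists the vertices as a dismantling ordering: every vertex except the
last is cornered, in the induced subgraph on it and the later vertices, by some
later vertex. -/
def IsDismantlingOrdering (G : RefGraph V) {n : ℕ} (e : Fin n ≃ V) : Prop :=
  ∀ i : Fin n, (i : ℕ) + 1 < n →
    ∃ j : Fin n, i < j ∧ e j ≠ e i ∧
      ∀ u, (∃ m : Fin n, i ≤ m ∧ e m = u) → G.Adj (e i) u → G.Adj (e j) u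

/-- `G` has a dismantling ordering. -/
def HasDismantling (G : RefGraph V) [Fintype V] : Prop :=
  ∃ e : Fin (Fintype.card V) ≃ V, G.IsDismantlingOrdering e

end RefGraph

/-!
By induction, `F_k(c)` is a nonempty subset of `G_k` for `1 ≤ k ≤ α`: a strict corner of `G_k`
is strictly cornered by a vertex of `G_k` with maximal neighbourhood, which survives into
`G_{k+1}`. If some `c' ∈ F_{α-2}(c)` were adjacent to all of `G_{α-2}`, it would strictly corner
every vertex of `G_{α-2}` that is not, so `G_{α-1}` would be a clique and every corner rank
would be at most `α - 1`.
-/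

namespace RefGraph

variable {V : Type*} (G : RefGraph V)

lemma StrictCornersIn.trans {S : Set V} {u v w : V} (hwv : G.StrictCornersIn S w v)
    (hvu : G.StrictCornersIn S v u) : G.StrictCornersIn S w u := by
  obtain ⟨hw, -, hvw, -⟩ := hwv
  obtain ⟨-, hu, huv, x, hxS, hvx, hux⟩ := hvu
  exact ⟨hw, hu, fun y hy h => hvw y hy (huv y hy h), x, hxS, hvw x hxS hvx, hux⟩

lemma exists_strictCornersIn_not_isStrictCorner [Finite V] {S : Set V} {u : V}
    (hu : G.IsStrictCorner S u) :
    ∃ w, G.StrictCornersIn S w u ∧ ¬ G.IsStrictCorner S w := by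
  obtain ⟨w, hwu, hmax⟩ := (Set.toFinite {w | G.StrictCornersIn S w u}).exists_maximalFor
    (fun w => {x | x ∈ S ∧ G.Adj w x}) _ hu
  refine ⟨w, hwu, fun ⟨w', hw'w⟩ => ?_⟩
  have hw'u := StrictCornersIn.trans G hw'w hwu
  obtain ⟨-, -, hww', x, hxS, hw'x, hwx⟩ := hw'w
  have hle : {x | x ∈ S ∧ G.Adj w x} ⊆ {x | x ∈ S ∧ G.Adj w' x} :=
    fun y ⟨hy, h⟩ => ⟨hy, hww' y hy h⟩
  exact hwx (hmax hw'u hle ⟨hxS, hw'x⟩).2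

lemma lvl_antitone : Antitone G.lvl :=
  antitone_nat_of_succ_le fun _ _ hv => hv.1

lemma cr_le_succ_of_mem_lvl {v : V} {m : ℕ} (hv : v ∈ G.lvl m)
    (h : G.IsStrictCorner (G.lvl m) v ∨ G.IsCliqueSet (G.lvl m)) : G.cr v ≤ m + 1 :=
  sInf_le ⟨m, rfl, hv, h⟩

lemma cr_le_of_notMem_lvl {v : V} : ∀ {m : ℕ}, v ∉ G.lvl m → G.cr v ≤ m
  | 0, h => absurd (Set.mem_univ v) h
  | m + 1, h => by
    by_cases hm : v ∈ G.lvl m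
    · have hv : G.IsStrictCorner (G.lvl m) v := not_not.mp fun hv => h ⟨hm, hv⟩
      exact_mod_cast G.cr_le_succ_of_mem_lvl hm (Or.inl hv)
    · exact (cr_le_of_notMem_lvl hm).trans (by exact_mod_cast m.le_succ)

lemma cr_le_of_isCliqueSet_lvl {m : ℕ} (hm : G.IsCliqueSet (G.lvl m)) (v : V) :
    G.cr v ≤ m + 1 := by
  by_cases hv : v ∈ G.lvl m
  · exact G.cr_le_succ_of_mem_lvl hv (Or.inr hm)
  · exact (G.cr_le_of_notMem_lvl hv).trans le_self_add

lemma one_le_cr (v : V) : 1 ≤ G.cr v :=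
  le_sInf fun _ ⟨_, h, _⟩ => h ▸ le_add_self

lemma GkSet_one : G.GkSet 1 = Set.univ :=
  Set.eq_univ_of_forall fun v => by exact_mod_cast G.one_le_cr v

lemma GkSet_succ_subset_lvl (m : ℕ) : G.GkSet (m + 1) ⊆ G.lvl m := by
  intro v hv
  by_contra h
  have : ((m + 1 : ℕ) : ℕ∞) ≤ m := le_trans hv (G.cr_le_of_notMem_lvl h)
  exact absurd (Nat.cast_le.mp this) (by omega)

lemma lvl_subset_GkSet_succ {m : ℕ} (hm : ∀ j < m, ¬ G.IsCliqueSet (G.lvl j)) :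
    G.lvl m ⊆ G.GkSet (m + 1) := by
  intro v hv
  change ((m + 1 : ℕ) : ℕ∞) ≤ sInf _
  refine le_sInf ?_
  rintro _ ⟨j, rfl, -, hj⟩
  suffices m ≤ j by exact_mod_cast Nat.succ_le_succ this
  by_contra! hjm
  rcases hj with hcorner | hclique
  · exact (G.lvl_antitone hjm hv).2 hcorner
  · exact hm j hjm hclique

lemma fk_subset_GkSet_succ (k : ℕ) (u : V) : G.fk k u ⊆ G.GkSet (k + 1) := by
  unfold fk
  split_ifs with h
  · rintro _ rfl
    exact_mod_cast Order.add_one_le_of_lt h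
  · exact fun _ hw => hw.1

lemma Fk_succ_subset_GkSet_succ (c : V) : ∀ k : ℕ, G.Fk (k + 1) c ⊆ G.GkSet (k + 1)
  | 0 => G.GkSet_one ▸ Set.subset_univ _
  | k + 1 => Set.iUnion₂_subset fun u _ => G.fk_subset_GkSet_succ (k + 1) u

lemma isCliqueSet_lvl_succ {m : ℕ} {w : V} (hw : w ∈ G.lvl m)
    (hadj : ∀ x ∈ G.lvl m, G.Adj w x) : G.IsCliqueSet (G.lvl (m + 1)) := by
  rintro u ⟨hu, hu_corner⟩ v ⟨hv, -⟩
  by_contra huv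
  exact hu_corner ⟨w, hw, hu, fun x hx _ => hadj x hx, v, hv, hadj v hv, huv⟩

section CornerRank

variable [Fintype V] {G} {α : ℕ} (hα : G.crGraph = α)
include hα

lemma not_isCliqueSet_lvl {m : ℕ} (hm : m + 1 < α) : ¬ G.IsCliqueSet (G.lvl m) := by
  intro hclique
  have : G.crGraph ≤ ((m + 1 : ℕ) : ℕ∞) :=
    Finset.sup_le fun v _ => by exact_mod_cast G.cr_le_of_isCliqueSet_lvl hclique v
  rw [hα] at this
  exact absurd (Nat.cast_le.mp this) (by omega)

lemma GkSet_succ_eq_lvl {m : ℕ} (hm : m + 1 ≤ α) : G.GkSet (m + 1) = G.lvl m :=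
  (G.GkSet_succ_subset_lvl m).antisymm
    (G.lvl_subset_GkSet_succ fun _ hj => not_isCliqueSet_lvl hα (by omega))

lemma fk_nonempty {m : ℕ} (hm : m + 2 ≤ α) {u : V} (hu : u ∈ G.GkSet (m + 1)) :
    (G.fk (m + 1) u).Nonempty := by
  unfold fk
  split_ifs with hlt
  · exact Set.singleton_nonempty u
  have hcorner : G.IsStrictCorner (G.lvl m) u := by
    by_contra h
    have hu' : u ∈ G.GkSet (m + 2) :=
      GkSet_succ_eq_lvl hα hm ▸ ⟨G.GkSet_succ_subset_lvl m hu, h⟩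
    exact hlt ((Nat.cast_lt.mpr (by omega)).trans_le hu')
  obtain ⟨w, hwu, hw⟩ := G.exists_strictCornersIn_not_isStrictCorner hcorner
  rw [GkSet_succ_eq_lvl hα (by omega : m + 1 ≤ α)]
  exact ⟨w, GkSet_succ_eq_lvl hα hm ▸ ⟨hwu.1, hw⟩, hwu⟩

lemma Fk_nonempty (c : V) : ∀ {k : ℕ}, k + 1 ≤ α → (G.Fk (k + 1) c).Nonempty
  | 0, _ => Set.singleton_nonempty c
  | k + 1, hk => by
    obtain ⟨u, hu⟩ := Fk_nonempty c (by omega : k + 1 ≤ α)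
    obtain ⟨w, hw⟩ := fk_nonempty hα hk (G.Fk_succ_subset_GkSet_succ c k hu)
    exact ⟨w, Set.mem_biUnion hu hw⟩

lemma exists_projSafe {k : ℕ} (hk : k + 3 ≤ α) (c : V) : ∃ r, G.ProjSafe (k + 1) c r := by
  obtain ⟨c', hc'⟩ := Fk_nonempty hα c (by omega : k + 1 ≤ α)
  by_contra! hsafe
  have hGk : G.GkSet (k + 1) = G.lvl k := GkSet_succ_eq_lvl hα (by omega)
  have hc'_mem : c' ∈ G.lvl k := hGk ▸ G.Fk_succ_subset_GkSet_succ c k hc'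
  have hadj : ∀ x ∈ G.lvl k, G.Adj c' x := fun x hx =>
    not_not.mp fun h => hsafe x ⟨show x ∈ G.GkSet (k + 1) from hGk ▸ hx, c', hc', h⟩
  exact not_isCliqueSet_lvl hα (by omega) (G.isCliqueSet_lvl_succ hc'_mem hadj)

end CornerRank

end RefGraph

theorem proj_safe_start_one_cop_win_general
    {V : Type*} [Fintype V] (G : RefGraph V)
    (α : ℕ) (hα2 : 2 < α) (hα : G.crGraph = (α : ℕ∞)) :
    ∀ c : V, ∃ r : V, ((α - 2 : ℕ) : ℕ∞) ≤ G.cr r ∧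
      ∃ c' ∈ G.Fk (α - 2) c, ¬ G.Adj c' r := by
  obtain ⟨k, rfl⟩ : ∃ k, α = k + 3 := ⟨α - 3, by omega⟩
  exact G.exists_projSafe hα le_rfl

/-- If `G` is `1`-cop-win of finite corner rank `α > 2`, then for
every cop position `c` there is an `(α-2)`-proj-safe vertex: some `r` with
`cr(r) ≥ α - 2` and some `c' ∈ F_{α-2}(c)` not adjacent to `r`. -/
theorem proj_safe_start_one_cop_win
    {V : Type*} [Fintype V] [Nonempty V] (G : RefGraph V)
    (α : ℕ) (hα2 : 2 < α) (hα : G.crGraph = (α : ℕ∞))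
    (h1 : G.OneCopWin α) :
    ∀ c : V, ∃ r : V, ((α - 2 : ℕ) : ℕ∞) ≤ G.cr r ∧
      ∃ c' ∈ G.Fk (α - 2) c, ¬ G.Adj c' r :=
  proj_safe_start_one_cop_win_general G α hα2 hα
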